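/- arXiv:1905.04465 — 3 statements merged into one kernel-verified Lean document; each statement's English description precedes it below -/
import Mathlib

section
/- For all natural numbers m, n, k and every natural number p with p ≤ n, one has C(m, n, k) = Σ_{i=0}^{p} binom(p, i) · C(m + i, n - p, k). -/
/-!
Marking each letter `2` by `X`, a constrained letter contributes `1 + X` and a free letter
`2 + X`, so `C m n k` is the coefficient of `X ^ k` in `(1 + X) ^ m * (2 + X) ^ n`.
Writing `2 + X = (1 + X) + 1` and expanding `p` of the `n` free factors by the binomial
theorem turns each of them into either a constrained letter or nothing, which is the identity.
-/

open Finset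

/-- The set of ternary words of length `m + n` (as functions `Fin (m+n) → Fin 3`)
having exactly `k` letters equal to `2` and no letter equal to `0` among the
first `m` letters. -/
def ternaryWords (m n k : ℕ) : Finset (Fin (m + n) → Fin 3) :=
  univ.filter fun w =>
    (univ.filter fun i => w i = 2).card = k ∧ ∀ i : Fin (m + n), (i : ℕ) < m → w i ≠ 0

/-- `C m n k` is the number of ternary words of length `m + n` with exactly `k`
twos and no zero among the first `m` letters; it equals the inset number
`{m,n choose k}` of Janjić–Petković. -/
def C (m n k : ℕ) : ℕ := (ternaryWords m n k).card

open Polynomial hiding C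

theorem card_filter_piFinset_sum_eq_coeff {ι α : Type*} [Fintype ι] [DecidableEq ι]
    (t : ι → Finset α) (wt : α → ℕ) (k : ℕ) :
    #{w ∈ Fintype.piFinset t | ∑ i, wt (w i) = k} =
      (∏ i, ∑ a ∈ t i, (X : ℕ[X]) ^ wt a).coeff k := by
  simp only [prod_univ_sum, prod_pow_eq_pow_sum, finsetSum_coeff, coeff_X_pow, sum_boole,
    Nat.cast_id, eq_comm]

theorem C_eq_coeff (m n k : ℕ) : C m n k = ((1 + X : ℕ[X]) ^ m * (2 + X) ^ n).coeff k := by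
  let allowed (i : Fin (m + n)) : Finset (Fin 3) := {a | (i : ℕ) < m → a ≠ 0}
  have hwords : ternaryWords m n k =
      {w ∈ Fintype.piFinset allowed | ∑ i, (if w i = 2 then 1 else 0) = k} := by
    ext w
    simp only [ternaryWords, allowed, mem_filter, mem_univ, true_and, Fintype.mem_piFinset,
      sum_boole, Nat.cast_id]
    exact and_comm
  have hletter (i : Fin (m + n)) : ∑ a ∈ allowed i, (X : ℕ[X]) ^ (if a = 2 then 1 else 0) =
      if (i : ℕ) < m then 1 + X else 2 + X := by
    split_ifs with hi <;> simp [allowed, sum_filter, Fin.sum_univ_three, hi, one_add_one_eq_two]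
  rw [C, hwords, card_filter_piFinset_sum_eq_coeff allowed fun a => if a = 2 then 1 else 0,
    prod_congr rfl fun i _ => hletter i, Fin.prod_univ_add]
  simp

theorem pow_mul_add_one_pow_eq_sum {R : Type*} [CommSemiring R] (x : R) (m : ℕ) {n p : ℕ}
    (hp : p ≤ n) :
    x ^ m * (x + 1) ^ n =
      ∑ i ∈ range (p + 1), p.choose i • (x ^ (m + i) * (x + 1) ^ (n - p)) := by
  rw [← Nat.sub_add_cancel hp, pow_add, add_pow x 1 p, Nat.add_sub_cancel, mul_sum, mul_sum]
  refine sum_congr rfl fun i _ => ?_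
  rw [nsmul_eq_mul]
  ring

theorem stmt_11 (m n k p : ℕ) (hp : p ≤ n) :
    C m n k = ∑ i ∈ Finset.range (p + 1), p.choose i * C (m + i) (n - p) k := by
  have hX : (2 + X : ℕ[X]) = (1 + X) + 1 := by ring
  simp only [C_eq_coeff, hX, pow_mul_add_one_pow_eq_sum (1 + X) m hp, finsetSum_coeff,
    coeff_smul, smul_eq_mul]
end

section
/- For all natural numbers m, n, k, one has C(m, n, k) = Σ_{i=0}^{n} binom(n, i) · binom(m + i, k). -/
open Finset

private lemma fin3_eq_one (a : Fin 3) (h0 : a ≠ 0) (h2 : a ≠ 2) : a = 1 := by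
  fin_cases a <;> simp_all

theorem stmt_12 (m n k : ℕ) :
    C m n k = ∑ i ∈ Finset.range (n + 1), n.choose i * (m + i).choose k := by
  classical
  set U : Finset (Fin (m + n)) := univ.filter (fun i => m ≤ (i : ℕ)) with hU
  have hUcard : U.card = n := by
    have h1 : U.card + (univ.filter (fun i : Fin (m+n) => ¬ (m ≤ (i : ℕ)))).card
        = m + n := by
      rw [hU, Finset.card_filter_add_card_filter_not]
      simp
    have h2 : (univ.filter (fun i : Fin (m+n) => ¬ (m ≤ (i : ℕ)))).card = m := by
      have : (univ.filter (fun i : Fin (m+n) => ¬ (m ≤ (i : ℕ))))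
          = Finset.map ⟨fun j : Fin m => (⟨(j : ℕ), by omega⟩ : Fin (m+n)),
              by intro a b hab; simpa [Fin.ext_iff] using hab⟩ univ := by
        ext x
        simp only [Finset.mem_filter, Finset.mem_univ, true_and, Finset.mem_map,
          Function.Embedding.coeFn_mk]
        constructor
        · intro hx
          refine ⟨⟨(x : ℕ), by omega⟩, ?_⟩
          exact Fin.ext rfl
        · rintro ⟨j, rfl⟩
          exact Nat.not_le.mpr j.isLt
      rw [this]; simp
    omega
  -- the target sigma set
  have key : C m n k = ∑ A ∈ U.powerset, ((m + n) - A.card).choose k := by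
    rw [C]
    have hcard : (ternaryWords m n k).card
        = (U.powerset.sigma fun A => (Aᶜ).powersetCard k).card := by
      apply Finset.card_bij'
        (fun w _ => ⟨univ.filter (fun i => w i = 0), univ.filter (fun i => w i = 2)⟩)
        (fun p _ => fun i => if i ∈ p.1 then 0 else if i ∈ p.2 then 2 else 1)
      · intro w hw
        funext i
        by_cases h0 : w i = 0
        · simp [h0]
        · by_cases h2 : w i = 2
          · simp [h0, h2]
          · simp [h0, h2, (fin3_eq_one (w i) h0 h2).symm]
      · rintro ⟨A, B⟩ hp
        simp only [Finset.mem_sigma, Finset.mem_powerset, Finset.mem_powersetCard] at hp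
        obtain ⟨hA, hBA, hBk⟩ := hp
        have hdisj : ∀ i, i ∈ B → i ∉ A := fun i hiB hiA => by simpa [hiA] using hBA hiB
        refine Sigma.ext ?_ (heq_of_eq ?_)
        · ext i
          simp only [Finset.mem_filter, Finset.mem_univ, true_and]
          by_cases hiA : i ∈ A
          · simp [hiA]
          · by_cases hiB : i ∈ B <;> simp [hiA, hiB]
        · ext i
          simp only [Finset.mem_filter, Finset.mem_univ, true_and]
          by_cases hiA : i ∈ A
          · have hnB : i ∉ B := fun h => hdisj i h hiA
            simp [hiA, hnB]
          · by_cases hiB : i ∈ B <;> simp [hiA, hiB]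
      · intro w hw
        simp only [ternaryWords, Finset.mem_filter, Finset.mem_univ, true_and] at hw
        simp only [Finset.mem_sigma, Finset.mem_powerset, Finset.mem_powersetCard]
        refine ⟨?_, ?_, hw.1⟩
        · intro i hi
          simp only [Finset.mem_filter, Finset.mem_univ, true_and] at hi
          simp only [hU, Finset.mem_filter, Finset.mem_univ, true_and]
          by_contra hlt
          exact hw.2 i (by omega) hi
        · intro i hi
          simp only [Finset.mem_filter, Finset.mem_univ, true_and] at hi ⊢
          simp [hi]
      · rintro ⟨A, B⟩ hp
        simp only [Finset.mem_sigma, Finset.mem_powerset, Finset.mem_powersetCard] at hp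
        obtain ⟨hA, hBA, hBk⟩ := hp
        simp only [ternaryWords, Finset.mem_filter, Finset.mem_univ, true_and]
        constructor
        · rw [← hBk]
          congr 1
          ext i
          simp only [Finset.mem_filter, Finset.mem_univ, true_and]
          by_cases hiA : i ∈ A
          · have : i ∉ B := fun hiB => by simpa [hiA] using hBA hiB
            simp [hiA, this]
          · by_cases hiB : i ∈ B <;> simp [hiA, hiB]
        · intro i hi hi0
          by_cases hiA : i ∈ A
          · have := hA hiA
            simp only [hU, Finset.mem_filter, Finset.mem_univ, true_and] at this
            omega
          · by_cases hiB : i ∈ B <;> simp [hiA, hiB] at hi0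
    rw [hcard, Finset.card_sigma]
    refine Finset.sum_congr rfl fun A hA => ?_
    rw [Finset.card_powersetCard, Finset.card_compl]
    simp
  rw [key]
  rw [Finset.sum_powerset]
  rw [hUcard]
  rw [← Finset.sum_range_reflect]
  simp only [Nat.add_sub_cancel]
  refine Finset.sum_congr rfl fun j hj => ?_
  simp only [Finset.mem_range] at hj
  have hj' : j ≤ n := by omega
  have : ∑ A ∈ Finset.powersetCard (n - j) U, ((m + n) - A.card).choose k
      = n.choose (n - j) * (m + j).choose k := by
    rw [Finset.sum_congr rfl (fun A hA => ?_), Finset.sum_const,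
      Finset.card_powersetCard, hUcard, smul_eq_mul]
    rw [(Finset.mem_powersetCard.mp hA).2]
    congr 1
    omega
  rw [this, Nat.choose_symm hj']
end

section
/- For all natural numbers m, n, the following identity of formal power series over ℤ holds: (2 - X)^n = (1 - X)^{m+n+1} · Σ_{k≥0} C(m + k, n, k) · X^k. Equivalently, (2-x)^n/(1-x)^{m+n+1} = Σ_{k≥0} C(m+k, n, k) x^k. -/
/-!
Removing the first letter of a counted word (a `1` or a `2`) gives
`C (m+1) n (k+1) = C m n (k+1) + C m n k`, and removing the last, unrestricted letter gives
`C m (n+1) (k+1) = 2 C m n (k+1) + C m n k`. For `F m n = ∑ₖ C (m+k) n k Xᵏ` these read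
`(1 - X) F (m+1) n = F m n` and `F m (n+1) = 2 F m n + X F (m+1) n`, so that
`(1 - X) F 0 (n+1) = (2 - X) F 0 n`. Since the all-twos word is the only one counted by `C k 0 k`,
`F 0 0 = 1 / (1 - X)`, and the identity follows by induction on `n`.
-/

open Finset

theorem card_filter_cons {α : Type*} [Fintype α] {L : ℕ} (P : (Fin (L + 1) → α) → Prop)
    [DecidablePred P] : #{w | P w} = ∑ a, #{v : Fin L → α | P (Fin.cons a v)} := by
  simp only [card_filter]
  rw [← (Fin.consEquiv fun _ => α).sum_comp, Fintype.sum_prod_type]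
  rfl

theorem card_filter_snoc {α : Type*} [Fintype α] {L : ℕ} (P : (Fin (L + 1) → α) → Prop)
    [DecidablePred P] : #{w | P w} = ∑ a, #{v : Fin L → α | P (Fin.snoc v a)} := by
  simp only [card_filter]
  rw [← (Fin.snocEquiv fun _ => α).sum_comp, Fintype.sum_prod_type]
  rfl

section Words

variable {L : ℕ}

-- `ternaryWords m n k` with its length `m + n` freed, so that recurrences in the length need no
-- casts along `m + 1 + n = m + n + 1`.
def restrictedWords (L m k : ℕ) : Finset (Fin L → Fin 3) :=
  {w | #{i | w i = 2} = k ∧ ∀ i : Fin L, (i : ℕ) < m → w i ≠ 0}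

theorem C_eq_card_restrictedWords (m n k : ℕ) : C m n k = #(restrictedWords (m + n) m k) := rfl

theorem card_eq_two_cons (a : Fin 3) (v : Fin L → Fin 3) :
    #{i | (Fin.cons a v : Fin (L + 1) → Fin 3) i = 2} =
      #{i | v i = 2} + if a = 2 then 1 else 0 := by
  simp only [card_filter, Fin.sum_univ_succ, Fin.cons_zero, Fin.cons_succ]
  ring

theorem card_eq_two_snoc (a : Fin 3) (v : Fin L → Fin 3) :
    #{i | (Fin.snoc v a : Fin (L + 1) → Fin 3) i = 2} =
      #{i | v i = 2} + if a = 2 then 1 else 0 := by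
  simp only [card_filter, Fin.sum_univ_castSucc, Fin.snoc_castSucc, Fin.snoc_last]

theorem forall_lt_ne_zero_cons (a : Fin 3) (v : Fin L → Fin 3) (m : ℕ) :
    (∀ i : Fin (L + 1), (i : ℕ) < m + 1 → (Fin.cons a v : Fin (L + 1) → Fin 3) i ≠ 0) ↔
      a ≠ 0 ∧ ∀ j : Fin L, (j : ℕ) < m → v j ≠ 0 := by
  simp [Fin.forall_fin_succ]

theorem forall_lt_ne_zero_snoc (a : Fin 3) (v : Fin L → Fin 3) {m : ℕ} (h : m ≤ L) :
    (∀ i : Fin (L + 1), (i : ℕ) < m → (Fin.snoc v a : Fin (L + 1) → Fin 3) i ≠ 0) ↔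
      ∀ j : Fin L, (j : ℕ) < m → v j ≠ 0 := by
  rw [Fin.forall_fin_succ']
  simp only [Fin.val_castSucc, Fin.snoc_castSucc, Fin.val_last, Fin.snoc_last]
  exact and_iff_left fun hL => absurd h (by omega)

theorem card_restrictedWords_succ_succ_succ (m k : ℕ) :
    #(restrictedWords (L + 1) (m + 1) (k + 1)) =
      #(restrictedWords L m (k + 1)) + #(restrictedWords L m k) := by
  rw [restrictedWords, card_filter_cons, Fin.sum_univ_three]
  simp only [card_eq_two_cons, forall_lt_ne_zero_cons]
  simp [restrictedWords]

theorem card_restrictedWords_succ_succ_zero (m : ℕ) :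
    #(restrictedWords (L + 1) (m + 1) 0) = #(restrictedWords L m 0) := by
  rw [restrictedWords, card_filter_cons, Fin.sum_univ_three]
  simp only [card_eq_two_cons, forall_lt_ne_zero_cons]
  simp [restrictedWords]

theorem card_restrictedWords_succ_of_le {m : ℕ} (h : m ≤ L) (k : ℕ) :
    #(restrictedWords (L + 1) m (k + 1)) =
      2 * #(restrictedWords L m (k + 1)) + #(restrictedWords L m k) := by
  rw [restrictedWords, card_filter_snoc, Fin.sum_univ_three]
  simp [card_eq_two_snoc, forall_lt_ne_zero_snoc _ _ h, restrictedWords]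
  ring

theorem card_restrictedWords_succ_zero_of_le {m : ℕ} (h : m ≤ L) :
    #(restrictedWords (L + 1) m 0) = 2 * #(restrictedWords L m 0) := by
  rw [restrictedWords, card_filter_snoc, Fin.sum_univ_three]
  simp [card_eq_two_snoc, forall_lt_ne_zero_snoc _ _ h, restrictedWords]
  ring

theorem restrictedWords_eq_empty {m k : ℕ} (h : L < k) : restrictedWords L m k = ∅ := by
  refine eq_empty_of_forall_notMem fun w hw => ?_
  have := card_le_univ (s := ({i | w i = 2} : Finset (Fin L)))
  simp only [restrictedWords, mem_filter, mem_univ, true_and, Fintype.card_fin] at hw this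
  omega

theorem card_restrictedWords_self (L : ℕ) : #(restrictedWords L L L) = 1 := by
  induction L with
  | zero => rfl
  | succ L ih =>
    rw [card_restrictedWords_succ_succ_succ, restrictedWords_eq_empty L.lt_succ_self, ih,
      card_empty]

end Words

theorem C_succ_left_succ (m n k : ℕ) : C (m + 1) n (k + 1) = C m n (k + 1) + C m n k := by
  rw [C_eq_card_restrictedWords, Nat.add_right_comm]
  exact card_restrictedWords_succ_succ_succ m k

theorem C_succ_left_zero (m n : ℕ) : C (m + 1) n 0 = C m n 0 := by
  rw [C_eq_card_restrictedWords, Nat.add_right_comm]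
  exact card_restrictedWords_succ_succ_zero m

theorem C_succ_right_succ (m n k : ℕ) : C m (n + 1) (k + 1) = 2 * C m n (k + 1) + C m n k :=
  card_restrictedWords_succ_of_le (m.le_add_right n) k

theorem C_succ_right_zero (m n : ℕ) : C m (n + 1) 0 = 2 * C m n 0 :=
  card_restrictedWords_succ_zero_of_le (m.le_add_right n)

theorem C_self_zero_self (k : ℕ) : C k 0 k = 1 := card_restrictedWords_self k

open PowerSeries (X coeff coeff_mk coeff_succ_X_mul mk_one_mul_one_sub_eq_one)

def insetSeries (m n : ℕ) : PowerSeries ℤ := PowerSeries.mk fun k => (C (m + k) n k : ℤ)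

theorem one_sub_X_mul_insetSeries_succ (m n : ℕ) :
    (1 - X) * insetSeries (m + 1) n = insetSeries m n := by
  ext (_ | k)
  · simp [insetSeries, C_succ_left_zero]
  · simp only [sub_mul, one_mul, map_sub, coeff_succ_X_mul, insetSeries, coeff_mk,
      Nat.add_right_comm m 1, ← add_assoc, C_succ_left_succ]
    push_cast
    ring

theorem one_sub_X_pow_mul_insetSeries (m n : ℕ) :
    (1 - X) ^ m * insetSeries m n = insetSeries 0 n := by
  induction m with
  | zero => rw [pow_zero, one_mul]
  | succ m ih => rw [pow_succ, mul_assoc, one_sub_X_mul_insetSeries_succ, ih]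

theorem insetSeries_succ_right (m n : ℕ) :
    insetSeries m (n + 1) = 2 * insetSeries m n + X * insetSeries (m + 1) n := by
  rw [two_mul]
  ext (_ | k)
  · simp [insetSeries, C_succ_right_zero, two_mul]
  · simp only [map_add, coeff_succ_X_mul, insetSeries, coeff_mk, ← add_assoc,
      Nat.add_right_comm m 1, C_succ_right_succ]
    push_cast
    ring

theorem one_sub_X_mul_insetSeries_zero_succ (n : ℕ) :
    (1 - X) * insetSeries 0 (n + 1) = (2 - X) * insetSeries 0 n := by
  rw [insetSeries_succ_right, mul_add, mul_left_comm (1 - X) X, one_sub_X_mul_insetSeries_succ]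
  ring

theorem insetSeries_zero_zero : insetSeries 0 0 = PowerSeries.mk 1 := by
  ext k
  simp [insetSeries, C_self_zero_self]

theorem one_sub_X_pow_mul_insetSeries_zero (n : ℕ) :
    (1 - X) ^ (n + 1) * insetSeries 0 n = (2 - X) ^ n := by
  induction n with
  | zero =>
    rw [insetSeries_zero_zero, zero_add, pow_one, pow_zero, mul_comm, mk_one_mul_one_sub_eq_one]
  | succ n ih =>
    rw [pow_succ, mul_assoc, one_sub_X_mul_insetSeries_zero_succ, mul_left_comm, ih, pow_succ']

theorem stmt_17 (m n : ℕ) :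
    (2 - PowerSeries.X : PowerSeries ℤ) ^ n =
      (1 - PowerSeries.X) ^ (m + n + 1) *
        PowerSeries.mk (fun k => (C (m + k) n k : ℤ)) := by
  change _ = _ * insetSeries m n
  rw [add_assoc, add_comm m, pow_add, mul_assoc, one_sub_X_pow_mul_insetSeries,
    one_sub_X_pow_mul_insetSeries_zero]
end
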